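/- Assume k is a field and n ≥ 6. Then the radical of the ideal (z_1, …, z_{n−1}) of R generated by the monomials z_i = ∏_{I∈𝓘, i∈I} x_I is not a prime ideal. (The vanishing locus of z_1,…,z_{n−1} is the fixed-point locus of the 𝔾_a-action on Spec Cox(X_n); since it has more than one irreducible component while the fixed-point locus of any linear 𝔾_a-action on affine space is irreducible, the 𝔾_a-action of Theorem 3.2 is non-linearizable for n ≥ 6.) -/

import Mathlib

open MvPolynomial

noncomputable section

/-- The index set 𝓘: subsets `I ⊆ {1,…,n−1}` with `1 ≤ |I| ≤ n−4`. -/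
abbrev Idx (n : ℕ) : Type := {I : Finset (Fin (n - 1)) // 1 ≤ I.card ∧ I.card ≤ n - 4}

/-- The variables of the Cox ring of `X_n`: the `y_i` and the `x_I`. -/
abbrev Vars (n : ℕ) : Type := Fin (n - 1) ⊕ Idx n

variable (k : Type) [Field k]

/-- `R = k[y_1,…,y_{n−1},(x_I)_{I∈𝓘}]`, the Cox ring of the toric variety `X_n`. -/
abbrev R (n : ℕ) : Type := MvPolynomial (Vars n) k

/-- The variable `x_I`. -/
def xx (n : ℕ) (I : Idx n) : R k n := X (Sum.inr I)

/-- `z_i = ∏_{I∈𝓘, i∈I} x_I`. -/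
def zz (n : ℕ) (i : Fin (n - 1)) : R k n :=
  ∏ I ∈ Finset.univ.filter (fun I : Idx n => i ∈ I.1), xx k n I

lemma prod_monomial {σ α : Type*} (T : Finset α) (f : α → (σ →₀ ℕ)) :
    ∏ a ∈ T, (monomial (f a) (1 : k)) = monomial (∑ a ∈ T, f a) 1 := by
  classical
  induction T using Finset.induction with
  | empty => simp
  | @insert a s h ih => rw [Finset.prod_insert h, Finset.sum_insert h, ih, monomial_mul, one_mul]

lemma coordsum {n : ℕ} (T : Finset (Idx n)) (J : Idx n) :
    (∑ I ∈ T, Finsupp.single (Sum.inr I : Vars n) (1 : ℕ)) (Sum.inr J)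
      = if J ∈ T then 1 else 0 := by
  classical
  rw [Finsupp.finset_sum_apply]
  simp [Finsupp.single_apply, Sum.inr.injEq]

/-- for `n ≥ 6` the radical of the ideal `(z_1,…,z_{n−1})` of `R` is not
prime (the fixed-point locus of the `𝔾_a`-action has several irreducible components,
whence the action is non-linearizable). -/
theorem stmt14 (n : ℕ) (hn : 6 ≤ n) :
    ¬ (Ideal.radical (Ideal.span (Set.range fun i : Fin (n - 1) => zz k n i))).IsPrime := by
  classical
  intro hP
  have h2 : 2 ≤ n - 4 := by omega
  set i0 : Fin (n-1) := ⟨0, by omega⟩ with hi0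
  set i1 : Fin (n-1) := ⟨1, by omega⟩ with hi1
  have h10 : i1 ≠ i0 := by simp [hi0, hi1, Fin.ext_iff]
  have cardok : ∀ i : Fin (n-1), 1 ≤ ({i} : Finset (Fin (n-1))).card ∧
      ({i} : Finset (Fin (n-1))).card ≤ n - 4 := fun i => by simp; omega
  set J0 : Idx n := ⟨{i0}, cardok i0⟩ with hJ0
  have cardok2 : ∀ j : Fin (n-1), 1 ≤ (insert j {i1} : Finset (Fin (n-1))).card ∧
      (insert j {i1} : Finset (Fin (n-1))).card ≤ n - 4 := by
    intro j
    constructor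
    · exact Finset.card_pos.2 ⟨j, Finset.mem_insert_self _ _⟩
    · calc (insert j {i1} : Finset (Fin (n-1))).card ≤ ({i1} : Finset (Fin (n-1))).card + 1 :=
            Finset.card_insert_le _ _
        _ ≤ n - 4 := by simp; omega
  -- exponent vectors
  set s : Fin (n-1) → (Vars n →₀ ℕ) := fun i =>
    ∑ I ∈ Finset.univ.filter (fun I : Idx n => i ∈ I.1),
      Finsupp.single (Sum.inr I : Vars n) 1 with hs
  have zzeq : ∀ i, zz k n i = monomial (s i) (1 : k) := by
    intro i
    rw [zz, ← prod_monomial]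
    exact Finset.prod_congr rfl fun I _ => by rw [xx, X]
  have hspan : Ideal.span (Set.range fun i : Fin (n - 1) => zz k n i)
      = Ideal.span ((fun t => monomial t (1 : k)) '' Set.range s) := by
    rw [← Set.range_comp]
    congr 1
    exact congrArg Set.range (funext zzeq)
  -- membership criterion
  have crit : ∀ (t : Vars n →₀ ℕ),
      (monomial t (1 : k)) ∈ Ideal.span (Set.range fun i : Fin (n - 1) => zz k n i) →
      ∃ j : Fin (n-1), s j ≤ t := by
    intro t ht
    rw [hspan, mem_ideal_span_monomial_image] at ht
    have hts : t ∈ (monomial t (1:k)).support := by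
      rw [support_monomial, if_neg (one_ne_zero)]; exact Finset.mem_singleton_self t
    obtain ⟨si, ⟨j, rfl⟩, hle⟩ := ht t hts
    exact ⟨j, hle⟩
  -- the two factors
  set sA : Vars n →₀ ℕ := Finsupp.single (Sum.inr J0) 1 with hsA
  set sB : Vars n →₀ ℕ :=
    ∑ I ∈ (Finset.univ.filter (fun I : Idx n => i0 ∈ I.1)).erase J0,
      Finsupp.single (Sum.inr I : Vars n) 1 with hsB
  have hJ0mem : J0 ∈ Finset.univ.filter (fun I : Idx n => i0 ∈ I.1) := by
    simp [hJ0]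
  have hmul : (monomial sA (1:k)) * monomial sB 1 = zz k n i0 := by
    rw [monomial_mul, one_mul, zzeq]
    exact congrArg (fun t => monomial t (1:k))
      (Finset.add_sum_erase _ (fun I : Idx n => Finsupp.single (Sum.inr I : Vars n) (1:ℕ)) hJ0mem)
  have hz0 : zz k n i0 ∈ (Ideal.span (Set.range fun i : Fin (n - 1) => zz k n i)).radical :=
    Ideal.le_radical (Ideal.subset_span ⟨i0, rfl⟩)
  rw [← hmul] at hz0
  rcases hP.mem_or_mem hz0 with hA | hB
  · -- a ∈ radical : contradiction
    obtain ⟨m, hm⟩ := hA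
    rw [monomial_pow, one_pow] at hm
    obtain ⟨j, hle⟩ := crit _ hm
    -- evaluate at Ja j = {j, 1}
    set Ja : Idx n := ⟨insert j {i1}, cardok2 j⟩ with hJa
    have h1 : s j (Sum.inr Ja) = 1 := by
      rw [hs, coordsum, if_pos]
      simp [hJa]
    have h2' : (m • sA) (Sum.inr Ja) = 0 := by
      rw [Finsupp.smul_apply, hsA, Finsupp.single_apply, if_neg, smul_zero]
      intro h
      have : J0 = Ja := Sum.inr.inj h
      have : i1 ∈ ({i0} : Finset (Fin (n-1))) := by
        rw [show ({i0} : Finset (Fin (n-1))) = Ja.1 from congrArg Subtype.val this, hJa]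
        exact Finset.mem_insert_of_mem (Finset.mem_singleton_self i1)
      exact h10 (Finset.mem_singleton.1 this)
    have := hle (Sum.inr Ja)
    omega
  · -- b ∈ radical : contradiction
    obtain ⟨m, hm⟩ := hB
    rw [monomial_pow, one_pow] at hm
    obtain ⟨j, hle⟩ := crit _ hm
    set Jb : Idx n := ⟨{j}, cardok j⟩ with hJb
    have h1 : s j (Sum.inr Jb) = 1 := by
      rw [hs, coordsum, if_pos]
      simp [hJb]
    have h2' : (m • sB) (Sum.inr Jb) = 0 := by
      rw [Finsupp.smul_apply, hsB, coordsum, if_neg, smul_zero]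
      intro h
      rw [Finset.mem_erase] at h
      obtain ⟨hne, hmem⟩ := h
      rw [Finset.mem_filter] at hmem
      have hj0 : i0 ∈ ({j} : Finset (Fin (n-1))) := hmem.2
      have : j = i0 := (Finset.mem_singleton.1 hj0).symm
      exact hne (by rw [hJb, hJ0]; congr 1; rw [this])
    have := hle (Sum.inr Jb)
    omega


end
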